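/- arXiv:2211.08448 — 2 statements merged into one kernel-verified Lean document; each statement's English description precedes it below -/
import Mathlib

section
/- There do not exist operators G_i^j (for an SU(N) with N ≥ 2) acting on the N²-spin system such that [G_i^j, S_k^{l±}] = δ_i^l S_k^{j±} − δ_k^j S_i^{l±} is consistent with the Jacobi identity and the spin algebra relation [S^{i+}_k, S^{k−}_j] = 2δ-weighted S^z terms; concretely, the identity Σ_k [[S^{i+}_k, S^{k−}_j], S^{l+}_h] = δ^i_j δ^j_h S^{l+}_h (which follows from the spin algebra with the stated transformation law) has left and right sides transforming inconsistently, yielding a contradiction for N ≥ 2. -/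
/-!
Take `i ≠ j`. The spins at the distinct sites `(i, j)` and `(i, i)` commute, so the Jacobi identity
with `G_j^i` gives `⁅⁅G, S_i^{j+}⁆, S_i^{i-}⁆ = ⁅⁅G, S_i^{i-}⁆, S_i^{j+}⁆`. Inserting the transformation
law, the left side is `⁅S_i^{i+} - S_j^{j+}, S_i^{i-}⁆ = 2 S_i^{iz}` and the right side is
`⁅S_i^{j+}, S_j^{i-}⁆ = 2 S_i^{jz}`. Hence `S_i^{iz} = S_i^{jz}`, which commutes with `S_i^{i+}`,
whereas `⁅S_i^{iz}, S_i^{i+}⁆ = S_i^{i+} ≠ 0`.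
-/

theorem lie_lie_comm_of_lie_eq_zero {L : Type*} [LieRing L] {x y : L} (g : L)
    (hxy : ⁅x, y⁆ = 0) : ⁅⁅g, x⁆, y⁆ = ⁅⁅g, y⁆, x⁆ := by
  have := leibniz_lie g x y
  rw [hxy, lie_zero, ← lie_skew x, ← sub_eq_add_neg] at this
  exact sub_eq_zero.mp this.symm

theorem statement13_general (N : ℕ) (hN : 2 ≤ N) (A : Type*) [Ring A] [Algebra ℂ A]
    (Sp Sm Sz G : Fin N → Fin N → A)
    (h1 : ∀ i j, Sp i j * Sm j i - Sm j i * Sp i j = (2 : ℂ) • Sz i j)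
    (h2 : ∀ i j, Sz i j * Sp i j - Sp i j * Sz i j = Sp i j)
    (hsites : ∀ i j k l : Fin N, (i, j) ≠ (k, l) →
      Commute (Sp i j) (Sp k l) ∧ Commute (Sp i j) (Sm l k) ∧
      Commute (Sp i j) (Sz k l) ∧ Commute (Sm j i) (Sm l k) ∧
      Commute (Sm j i) (Sz k l) ∧ Commute (Sz i j) (Sz k l))
    (hGp : ∀ i j k l, G i j * Sp k l - Sp k l * G i j =
      (if i = l then (1 : ℂ) else 0) • Sp k j - (if k = j then (1 : ℂ) else 0) • Sp i l)
    (hGm : ∀ i j k l, G i j * Sm k l - Sm k l * G i j =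
      (if i = l then (1 : ℂ) else 0) • Sm k j - (if k = j then (1 : ℂ) else 0) • Sm i l)
    (hnt : ∀ i j, Sp i j ≠ 0) :
    False := by
  let _ : LieRing A := LieRing.ofAssociativeRing
  obtain ⟨i, j, hij⟩ : ∃ i j : Fin N, i ≠ j :=
    ⟨⟨0, by omega⟩, ⟨1, by omega⟩, by simp [Fin.ext_iff]⟩
  have hspin (a b : Fin N) : ⁅Sp a b, Sm b a⁆ = (2 : ℂ) • Sz a b := by rw [Ring.lie_def, h1]
  have hcomm (a b c d : Fin N) (h : (a, b) ≠ (c, d)) : ⁅Sp a b, Sm d c⁆ = 0 :=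
    commute_iff_lie_eq.mp (hsites a b c d h).2.1
  have hGSp : ⁅G j i, Sp i j⁆ = Sp i i - Sp j j := by simpa [Ring.lie_def] using hGp j i i j
  have hGSm : ⁅G j i, Sm i i⁆ = -Sm j i := by simpa [Ring.lie_def, hij.symm] using hGm j i i i
  have hjacobi := lie_lie_comm_of_lie_eq_zero (G j i) (hcomm i j i i (by simp [hij.symm]))
  rw [hGSp, hGSm, sub_lie, neg_lie, lie_skew, hspin, hspin,
    hcomm j j i i (by simp [hij.symm]), sub_zero] at hjacobi
  have hSz : Sz i i = Sz i j := smul_right_injective A two_ne_zero hjacobi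
  apply hnt i i
  rw [← h2 i i, hSz, ← Ring.lie_def, ← commute_iff_lie_eq]
  exact (hsites i i i j (by simp [hij])).2.2.1.symm

/-- for `N ≥ 2` there are no operators `G_i^j` implementing the adjoint
`SU(N)` action `[G_i^j, S_k^{l±}] = δ_i^l S_k^{j±} − δ_k^j S_i^{l±}` (and commuting with
the `S^z`'s) consistently with the `su(2)` algebra of the `N²` nontrivial spins. -/
theorem statement13 (N : ℕ) (hN : 2 ≤ N) (A : Type*) [Ring A] [Algebra ℂ A]
    (Sp Sm Sz G : Fin N → Fin N → A)
    (h1 : ∀ i j, Sp i j * Sm j i - Sm j i * Sp i j = (2 : ℂ) • Sz i j)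
    (h2 : ∀ i j, Sz i j * Sp i j - Sp i j * Sz i j = Sp i j)
    (h3 : ∀ i j, Sz i j * Sm j i - Sm j i * Sz i j = -(Sm j i))
    (hsites : ∀ i j k l : Fin N, (i, j) ≠ (k, l) →
      Commute (Sp i j) (Sp k l) ∧ Commute (Sp i j) (Sm l k) ∧
      Commute (Sp i j) (Sz k l) ∧ Commute (Sm j i) (Sm l k) ∧
      Commute (Sm j i) (Sz k l) ∧ Commute (Sz i j) (Sz k l))
    (hGp : ∀ i j k l, G i j * Sp k l - Sp k l * G i j =
      (if i = l then (1 : ℂ) else 0) • Sp k j - (if k = j then (1 : ℂ) else 0) • Sp i l)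
    (hGm : ∀ i j k l, G i j * Sm k l - Sm k l * G i j =
      (if i = l then (1 : ℂ) else 0) • Sm k j - (if k = j then (1 : ℂ) else 0) • Sm i l)
    (hGz : ∀ i j k l, G i j * Sz k l - Sz k l * G i j = 0)
    (hnt : ∀ i j, Sp i j ≠ 0) :
    False :=
  statement13_general N hN A Sp Sm Sz G h1 h2 hsites hGp hGm hnt
end

section
/- For N² mutually commuting spin-1/2 systems with collective raising operators Tr(S⁺^n) (cyclic traces in matrix indices), the state identity Tr(S⁻²)Tr(S⁺²)Tr(S⁺²)|0⟩ = (4N² − 4N − 8)Tr(S⁺²)|0⟩ + 32 Σ_i S^{i+}_i S^{i+}_i |0⟩ holds, where |0⟩ is the all-spins-down state. In particular, for spin-1/2 (where (S^{i+}_i)² = 0), Tr(S⁻²)Tr(S⁺²)Tr(S⁺²)|0⟩ = (4N² − 4N − 8)Tr(S⁺²)|0⟩. -/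
/-!
Write `A = Tr(S⁺²)`. At site `(i, j)` the lowering operator and `S^z` commute with `A` up to
`[Sm j i, A] = -2 (Sz i j Sp j i + Sp j i Sz i j)` and `[Sz i j, A] = Sp i j Sp j i + Sp j i Sp i j`,
because they fail to commute only with the raising operator of their own site.
Normal ordering, i.e. moving every lowering and `S^z` operator to the right of all raising
operators, where it annihilates or rescales `|0⟩`, gives
`Sm i j Sm j i A² |0⟩ = 4 A |0⟩ - 8 Sp i j Sp j i |0⟩` for `i ≠ j` and `24 (Sp i i)² |0⟩` for `i = j`.
Summing over the `N²` sites gives the identity.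
-/

/-- `Tr(S⁺²) = Σ_{i,j} S^{i+}_j S^{j+}_i` (with `Sp a b = S_a^{b+}`). -/
noncomputable def trSq {H : Type*} [AddCommGroup H] [Module ℂ H] {N : ℕ}
    (Sp : Fin N → Fin N → Module.End ℂ H) : Module.End ℂ H :=
  ∑ i : Fin N, ∑ j : Fin N, Sp i j * Sp j i

section

variable {H : Type*} [AddCommGroup H] [Module ℂ H] {N : ℕ}

theorem trSq_apply (S : Fin N → Fin N → Module.End ℂ H) (w : H) :
    trSq S w = ∑ i, ∑ j, S i j (S j i w) := by
  simp [trSq, LinearMap.sum_apply]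

theorem apply_trSq_of_apply_raising {Sp : Fin N → Fin N → Module.End ℂ H} {X Y : Module.End ℂ H}
    (i j : Fin N) (hX : ∀ a b w, X (Sp a b w) = Sp a b (X w) + if (a, b) = (i, j) then Y w else 0)
    (w : H) : X (trSq Sp w) = trSq Sp (X w) + Y (Sp j i w) + Sp j i (Y w) := by
  simp only [trSq_apply, map_sum, hX, map_add, Finset.sum_add_distrib, Prod.mk.injEq]
  simp only [ite_and, apply_ite (Sp _ _), map_zero, Finset.sum_ite_eq', Finset.mem_univ, if_true,
    Finset.sum_ite_irrel, Finset.sum_const_zero]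
  abel

/-- Site `(i, j)` carries the raising operator `Sp i j`, the lowering operator `Sm j i` and `Sz i j`. -/
structure RaisingCommutators (Sp Sm Sz : Fin N → Fin N → Module.End ℂ H) : Prop where
  raising_lowering : ∀ i j, Sp i j * Sm j i - Sm j i * Sp i j = (2 : ℂ) • Sz i j
  sz_raising : ∀ i j, Sz i j * Sp i j - Sp i j * Sz i j = Sp i j
  commute_raising_raising : ∀ i j k l, (i, j) ≠ (k, l) → Commute (Sp i j) (Sp k l)
  commute_raising_lowering : ∀ i j k l, (i, j) ≠ (k, l) → Commute (Sp i j) (Sm l k)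
  commute_raising_sz : ∀ i j k l, (i, j) ≠ (k, l) → Commute (Sp i j) (Sz k l)

namespace RaisingCommutators

variable {Sp Sm Sz : Fin N → Fin N → Module.End ℂ H}

theorem lowering_apply_raising (hS : RaisingCommutators Sp Sm Sz) (i j a b : Fin N) (w : H) :
    Sm j i (Sp a b w) = Sp a b (Sm j i w) + if (a, b) = (i, j) then -(2 : ℂ) • Sz i j w else 0 := by
  split_ifs with hab
  · obtain ⟨rfl, rfl⟩ := Prod.mk.inj hab
    have := congr($(hS.raising_lowering a b) w)
    simp only [LinearMap.sub_apply, Module.End.mul_apply, LinearMap.smul_apply] at this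
    linear_combination (norm := module) -this
  · rw [add_zero]
    exact congr($((hS.commute_raising_lowering a b i j hab).eq.symm) w)

theorem sz_apply_raising (hS : RaisingCommutators Sp Sm Sz) (i j a b : Fin N) (w : H) :
    Sz i j (Sp a b w) = Sp a b (Sz i j w) + if (a, b) = (i, j) then Sp i j w else 0 := by
  split_ifs with hab
  · obtain ⟨rfl, rfl⟩ := Prod.mk.inj hab
    have := congr($(hS.sz_raising a b) w)
    simp only [LinearMap.sub_apply, Module.End.mul_apply] at this
    linear_combination (norm := module) this
  · rw [add_zero]
    exact congr($((hS.commute_raising_sz a b i j hab).eq.symm) w)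

theorem lowering_apply_trSq (hS : RaisingCommutators Sp Sm Sz) (i j : Fin N) (w : H) :
    Sm j i (trSq Sp w) =
      trSq Sp (Sm j i w) - (2 : ℂ) • (Sz i j (Sp j i w) + Sp j i (Sz i j w)) := by
  rw [apply_trSq_of_apply_raising (Y := -(2 : ℂ) • Sz i j) i j (hS.lowering_apply_raising i j)]
  simp only [LinearMap.smul_apply, map_smul]
  module

theorem sz_apply_trSq (hS : RaisingCommutators Sp Sm Sz) (i j : Fin N) (w : H) :
    Sz i j (trSq Sp w) = trSq Sp (Sz i j w) + Sp i j (Sp j i w) + Sp j i (Sp i j w) :=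
  apply_trSq_of_apply_raising i j (hS.sz_apply_raising i j) w

theorem raising_apply_raising_transpose (hS : RaisingCommutators Sp Sm Sz) (i j : Fin N) (w : H) :
    Sp j i (Sp i j w) = Sp i j (Sp j i w) := by
  by_cases hij : i = j
  · rw [hij]
  · exact congr($((hS.commute_raising_raising j i i j (by simp [Ne.symm hij])).eq) w)

theorem lowering_lowering_trSq_trSq_vacuum (hS : RaisingCommutators Sp Sm Sz) {v : H}
    (hvac : ∀ i j, Sm i j v = 0) (hz : ∀ i j, Sz i j v = (-(1 / 2) : ℂ) • v) (i j : Fin N) :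
    Sm i j (Sm j i (trSq Sp (trSq Sp v))) =
      (4 : ℂ) • trSq Sp v - (8 : ℂ) • Sp i j (Sp j i v) +
        if i = j then (32 : ℂ) • Sp i j (Sp j i v) - (4 : ℂ) • trSq Sp v else 0 := by
  by_cases hij : i = j
  · subst hij
    simp only [hS.lowering_apply_trSq, hS.sz_apply_trSq, hS.lowering_apply_raising,
      hS.sz_apply_raising, hvac, hz, map_add, map_sub, map_smul, map_zero, if_true, zero_add]
    module
  · simp only [hS.lowering_apply_trSq, hS.sz_apply_trSq, hS.lowering_apply_raising,
      hS.sz_apply_raising, hvac, hz, map_add, map_sub, map_smul, map_zero,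
      hS.raising_apply_raising_transpose j i, Prod.mk.injEq, hij, Ne.symm hij, if_false, if_true,
      and_self, zero_add]
    module

end RaisingCommutators

end

theorem statement15_general (N : ℕ) (H : Type*) [AddCommGroup H] [Module ℂ H]
    (Sp Sm Sz : Fin N → Fin N → Module.End ℂ H) (v : H)
    (h1 : ∀ i j, Sp i j * Sm j i - Sm j i * Sp i j = (2 : ℂ) • Sz i j)
    (h2 : ∀ i j, Sz i j * Sp i j - Sp i j * Sz i j = Sp i j)
    (hsites : ∀ i j k l : Fin N, (i, j) ≠ (k, l) →
      Commute (Sp i j) (Sp k l) ∧ Commute (Sp i j) (Sm l k) ∧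
      Commute (Sp i j) (Sz k l) ∧ Commute (Sm j i) (Sm l k) ∧
      Commute (Sm j i) (Sz k l) ∧ Commute (Sz i j) (Sz k l))
    (hvac : ∀ i j, Sm i j v = 0)
    (hz : ∀ i j, Sz i j v = (-(1 / 2) : ℂ) • v) :
    (trSq Sm * trSq Sp * trSq Sp) v =
      ((4 * (N : ℂ) ^ 2 - 4 * N - 8) : ℂ) • (trSq Sp v) +
        (32 : ℂ) • ((∑ i : Fin N, Sp i i * Sp i i) v) ∧
    ((∀ i : Fin N, Sp i i * Sp i i = 0) →
      (trSq Sm * trSq Sp * trSq Sp) v =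
        ((4 * (N : ℂ) ^ 2 - 4 * N - 8) : ℂ) • (trSq Sp v)) := by
  have hS : RaisingCommutators Sp Sm Sz := ⟨h1, h2, fun i j k l h => (hsites i j k l h).1,
    fun i j k l h => (hsites i j k l h).2.1, fun i j k l h => (hsites i j k l h).2.2.1⟩
  have main : (trSq Sm * trSq Sp * trSq Sp) v =
      ((4 * (N : ℂ) ^ 2 - 4 * N - 8) : ℂ) • (trSq Sp v) +
        (32 : ℂ) • ((∑ i : Fin N, Sp i i * Sp i i) v) := by
    rw [Module.End.mul_apply, Module.End.mul_apply, trSq_apply]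
    simp only [hS.lowering_lowering_trSq_trSq_vacuum hvac hz, Finset.sum_add_distrib,
      Finset.sum_sub_distrib, ← Finset.smul_sum, ← trSq_apply, Finset.sum_ite_eq,
      Finset.mem_univ, if_true, Finset.sum_const, Finset.card_univ, Fintype.card_fin,
      LinearMap.sum_apply, Module.End.mul_apply]
    simp only [← Nat.cast_smul_eq_nsmul ℂ]
    module
  refine ⟨main, fun hdiag => ?_⟩
  simp [main, hdiag]

/-- for `N²` spin systems with all spins down in `|0⟩`,
`Tr(S⁻²)Tr(S⁺²)Tr(S⁺²)|0⟩ = (4N²−4N−8) Tr(S⁺²)|0⟩ + 32 Σ_i S^{i+}_i S^{i+}_i |0⟩`;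
in particular for spin-1/2, where `(S^{i+}_i)² = 0`, the last term drops out. -/
theorem statement15 (N : ℕ) (H : Type*) [AddCommGroup H] [Module ℂ H]
    (Sp Sm Sz : Fin N → Fin N → Module.End ℂ H) (v : H)
    (h1 : ∀ i j, Sp i j * Sm j i - Sm j i * Sp i j = (2 : ℂ) • Sz i j)
    (h2 : ∀ i j, Sz i j * Sp i j - Sp i j * Sz i j = Sp i j)
    (h3 : ∀ i j, Sz i j * Sm j i - Sm j i * Sz i j = -(Sm j i))
    (hsites : ∀ i j k l : Fin N, (i, j) ≠ (k, l) →
      Commute (Sp i j) (Sp k l) ∧ Commute (Sp i j) (Sm l k) ∧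
      Commute (Sp i j) (Sz k l) ∧ Commute (Sm j i) (Sm l k) ∧
      Commute (Sm j i) (Sz k l) ∧ Commute (Sz i j) (Sz k l))
    (hvac : ∀ i j, Sm i j v = 0)
    (hz : ∀ i j, Sz i j v = (-(1 / 2) : ℂ) • v) :
    (trSq Sm * trSq Sp * trSq Sp) v =
      ((4 * (N : ℂ) ^ 2 - 4 * N - 8) : ℂ) • (trSq Sp v) +
        (32 : ℂ) • ((∑ i : Fin N, Sp i i * Sp i i) v) ∧
    ((∀ i : Fin N, Sp i i * Sp i i = 0) →
      (trSq Sm * trSq Sp * trSq Sp) v =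
        ((4 * (N : ℂ) ^ 2 - 4 * N - 8) : ℂ) • (trSq Sp v)) :=
  statement15_general N H Sp Sm Sz v h1 h2 hsites hvac hz
end
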